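/- arXiv:math-ph/0103042 — 4 statements merged into one kernel-verified Lean document; each statement's English description precedes it below -/
import Mathlib

section
/- Let γ, σ, β be continuous real-valued functions on [0,∞) and let μ be a positive C¹ function on [0,∞). Suppose that for all t ≥ 0: 0 ≤ σ(t) ≤ (μ(t)/2)(γ(t) − μ'(t)/μ(t)), β(t) ≤ (1/(2μ(t)))(γ(t) − μ'(t)/μ(t)), and μ(0)v(0) < 1. Then any nonnegative C¹ function v on [0,∞) satisfying v'(t) ≤ −γ(t)v(t) + σ(t)v(t)² + β(t) for all t ≥ 0 obeys 0 ≤ v(t) < 1/μ(t) for all t ≥ 0. -/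
open Set Real

theorem riccati_inequality_inversion
    (γ σ β μ μ' v v' : ℝ → ℝ)
    (hγ : ContinuousOn γ (Ici 0)) (hσ : ContinuousOn σ (Ici 0))
    (hβ : ContinuousOn β (Ici 0))
    (hμpos : ∀ t ∈ Ici (0:ℝ), 0 < μ t)
    (hμderiv : ∀ t ∈ Ici (0:ℝ), HasDerivAt μ (μ' t) t)
    (hμ' : ContinuousOn μ' (Ici 0))
    (hσ0 : ∀ t ∈ Ici (0:ℝ), 0 ≤ σ t)
    (hσle : ∀ t ∈ Ici (0:ℝ), σ t ≤ μ t / 2 * (γ t - μ' t / μ t))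
    (hβle : ∀ t ∈ Ici (0:ℝ), β t ≤ 1 / (2 * μ t) * (γ t - μ' t / μ t))
    (hinit : μ 0 * v 0 < 1)
    (hvnonneg : ∀ t ∈ Ici (0:ℝ), 0 ≤ v t)
    (hvderiv : ∀ t ∈ Ici (0:ℝ), HasDerivAt v (v' t) t)
    (hvineq : ∀ t ∈ Ici (0:ℝ), v' t ≤ -γ t * v t + σ t * (v t) ^ 2 + β t) :
    ∀ t ∈ Ici (0:ℝ), 0 ≤ v t ∧ v t < 1 / μ t := by
  -- main claim: μ t * v t < 1 for all t ≥ 0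
  suffices H : ∀ t ∈ Ici (0:ℝ), μ t * v t < 1 by
    intro t ht
    refine ⟨hvnonneg t ht, ?_⟩
    rw [lt_div_iff₀ (hμpos t ht)]
    have := H t ht; linarith [H t ht]
  set f : ℝ → ℝ := fun t => 1 - μ t * v t with hf_def
  -- continuity facts
  have hμcont : ContinuousOn μ (Ici 0) :=
    fun t ht => (hμderiv t ht).continuousAt.continuousWithinAt
  have hfca : ∀ t ∈ Ici (0:ℝ), ContinuousAt f t := fun t ht =>
    continuousAt_const.sub ((hμderiv t ht).continuousAt.mul (hvderiv t ht).continuousAt)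
  have hacont : ContinuousOn (fun t => γ t - μ' t / μ t) (Ici 0) :=
    hγ.sub (hμ'.div hμcont fun t ht => (hμpos t ht).ne')
  -- a = γ - μ'/μ is nonnegative on Ici 0
  have hanonneg : ∀ t ∈ Ici (0:ℝ), 0 ≤ γ t - μ' t / μ t := by
    intro t ht
    have h1 := hσ0 t ht
    have h2 := hσle t ht
    have h3 := hμpos t ht
    nlinarith
  -- f ≤ 1 on Ici 0
  have hfle1 : ∀ t ∈ Ici (0:ℝ), f t ≤ 1 := by
    intro t ht
    have := mul_nonneg (hμpos t ht).le (hvnonneg t ht)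
    simp only [hf_def]; linarith
  -- derivative of f
  have hfderiv : ∀ t ∈ Ici (0:ℝ),
      HasDerivAt f (-(μ' t * v t + μ t * v' t)) t := by
    intro t ht
    have h := ((hμderiv t ht).mul (hvderiv t ht)).const_sub 1
    convert h using 1
    all_goals rfl
  -- the key Riccati estimate on the derivative
  have hkey : ∀ t ∈ Ici (0:ℝ),
      μ' t * v t + μ t * v' t ≤ (γ t - μ' t / μ t) / 2 * (f t) ^ 2 := by
    intro t ht
    have hm : 0 < μ t := hμpos t ht
    have hmne : μ t ≠ 0 := hm.ne'
    have hσ2 : 2 * σ t ≤ γ t * μ t - μ' t := by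
      have h2 := hσle t ht
      have he : μ t / 2 * (γ t - μ' t / μ t) = (γ t * μ t - μ' t) / 2 := by
        field_simp
      rw [he] at h2; linarith
    have hβ2 : 2 * (μ t) ^ 2 * β t ≤ γ t * μ t - μ' t := by
      have h2 := hβle t ht
      have h3 : 2 * (μ t) ^ 2 * (1 / (2 * μ t) * (γ t - μ' t / μ t))
          = γ t * μ t - μ' t := by field_simp
      nlinarith [mul_le_mul_of_nonneg_left h2 (by positivity : (0:ℝ) ≤ 2 * (μ t)^2)]
    have h3 := hvineq t ht
    have T1 : (μ t) ^ 2 * v' t ≤ (μ t) ^ 2 * (-γ t * v t + σ t * (v t) ^ 2 + β t) :=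
      mul_le_mul_of_nonneg_left h3 (by positivity)
    have T2 : 0 ≤ (γ t * μ t - μ' t - 2 * σ t) * (μ t * v t) ^ 2 :=
      mul_nonneg (by linarith) (sq_nonneg _)
    have T3 : 0 ≤ γ t * μ t - μ' t - 2 * (μ t) ^ 2 * β t := by linarith
    have hgoal : (μ' t * v t + μ t * v' t) * (μ t * 2)
        ≤ (γ t * μ t - μ' t) * (f t) ^ 2 := by
      simp only [hf_def]
      nlinarith [T1, T2, T3]
    have he2 : γ t - μ' t / μ t = (γ t * μ t - μ' t) / μ t := by
      field_simp
    rw [he2, div_div, div_mul_eq_mul_div, le_div_iff₀ (by positivity)]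
    exact hgoal
  -- suppose the claim fails
  by_contra hcon
  push_neg at hcon
  obtain ⟨t₁, ht₁, ht₁ge⟩ := hcon
  have hf0 : 0 < f 0 := by simp only [hf_def]; linarith
  have hft₁ : f t₁ ≤ 0 := by simp only [hf_def]; linarith
  have ht₁pos : 0 < t₁ := by
    rcases lt_or_eq_of_le (mem_Ici.mp ht₁) with h | h
    · exact h
    · exfalso; rw [← h] at hft₁; linarith
  -- the set of bad times in [0, t₁]
  set S : Set ℝ := Icc 0 t₁ ∩ f ⁻¹' (Iic 0) with hS_def
  have hfcont₁ : ContinuousOn f (Icc 0 t₁) := fun t ht =>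
    (hfca t (mem_of_mem_of_subset ht (Icc_subset_Ici_self))).continuousWithinAt
  have hSclosed : IsClosed S :=
    hfcont₁.preimage_isClosed_of_isClosed isClosed_Icc isClosed_Iic
  have hSne : S.Nonempty := ⟨t₁, ⟨ht₁pos.le, le_refl _⟩, hft₁⟩
  have hSbdd : BddBelow S := ⟨0, fun x hx => hx.1.1⟩
  set t₀ : ℝ := sInf S with ht₀_def
  have ht₀mem : t₀ ∈ S := hSclosed.csInf_mem hSne hSbdd
  have ht₀0 : 0 ≤ t₀ := ht₀mem.1.1
  have hft₀ : f t₀ ≤ 0 := ht₀mem.2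
  have ht₀pos : 0 < t₀ := by
    rcases lt_or_eq_of_le ht₀0 with h | h
    · exact h
    · exfalso; rw [← h] at hft₀; linarith
  -- f > 0 on [0, t₀)
  have hfpos : ∀ t ∈ Ico (0:ℝ) t₀, 0 < f t := by
    intro t ⟨h0, h1⟩
    by_contra hle
    push_neg at hle
    have : t ∈ S := ⟨⟨h0, h1.le.trans ht₀mem.1.2⟩, hle⟩
    exact absurd (csInf_le hSbdd this) (not_le.mpr h1)
  -- maximum of a/2 on [0, t₀]
  have hIcc_sub : Icc (0:ℝ) t₀ ⊆ Ici 0 := Icc_subset_Ici_self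
  obtain ⟨c, hcmem, hcmax⟩ := isCompact_Icc.exists_isMaxOn (nonempty_Icc.mpr ht₀0)
    (hacont.mono hIcc_sub)
  set M : ℝ := (γ c - μ' c / μ c) / 2 with hM_def
  have hM0 : 0 ≤ M := by
    have := hanonneg c (hIcc_sub hcmem); simp only [hM_def]; linarith
  -- auxiliary function h = f * exp(M t), monotone on [0, t₀]
  set g : ℝ → ℝ := fun t => f t * Real.exp (M * t) with hg_def
  have hgderiv : ∀ t ∈ Ici (0:ℝ), HasDerivAt g
      ((-(μ' t * v t + μ t * v' t)) * Real.exp (M * t) + f t * (Real.exp (M * t) * M)) t := by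
    intro t ht
    have hid : HasDerivAt (fun s : ℝ => M * s) M t := by
      simpa using (hasDerivAt_id t).const_mul M
    exact (hfderiv t ht).mul hid.exp
  have hmono : MonotoneOn g (Icc 0 t₀) := by
    apply monotoneOn_of_deriv_nonneg (convex_Icc 0 t₀)
    · exact fun t ht => ((hfca t (hIcc_sub ht)).mul
        (Real.continuous_exp.comp (continuous_const.mul continuous_id)).continuousAt).continuousWithinAt
    · intro t ht
      rw [interior_Icc] at ht
      exact ((hgderiv t (hIcc_sub (Ioo_subset_Icc_self ht))).differentiableAt).differentiableWithinAt
    · intro t ht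
      rw [interior_Icc] at ht
      have htI : t ∈ Ici (0:ℝ) := hIcc_sub (Ioo_subset_Icc_self ht)
      rw [(hgderiv t htI).deriv]
      have hfpos_t : 0 < f t := hfpos t ⟨ht.1.le, ht.2⟩
      have hfle1_t : f t ≤ 1 := hfle1 t htI
      have hat : 0 ≤ γ t - μ' t / μ t := hanonneg t htI
      have hatle : γ t - μ' t / μ t ≤ γ c - μ' c / μ c :=
        hcmax ⟨ht.1.le, ht.2.le⟩
      have hkey_t := hkey t htI
      have hsq : (γ t - μ' t / μ t) / 2 * (f t) ^ 2 ≤ M * f t := by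
        have h1 : (γ t - μ' t / μ t) / 2 * (f t) ^ 2 ≤ (γ t - μ' t / μ t) / 2 * f t := by
          nlinarith [mul_nonneg hat (mul_nonneg hfpos_t.le
            (by linarith : (0:ℝ) ≤ 1 - f t))]
        have h2 : (γ t - μ' t / μ t) / 2 * f t ≤ M * f t := by
          apply mul_le_mul_of_nonneg_right _ hfpos_t.le
          simp only [hM_def]; linarith
        linarith
      have hexp : 0 < Real.exp (M * t) := Real.exp_pos _
      have h0 : 0 ≤ -(μ' t * v t + μ t * v' t) + M * f t := by
        have := hkey_t.trans hsq; linarith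
      nlinarith [mul_nonneg h0 hexp.le]
  have hle : g 0 ≤ g t₀ :=
    hmono ⟨le_refl _, ht₀0⟩ ⟨ht₀0, le_refl _⟩ ht₀0
  have hg0 : 0 < g 0 := by
    simp only [hg_def]
    positivity
  have hgt₀ : g t₀ ≤ 0 := by
    simp only [hg_def]
    exact mul_nonpos_of_nonpos_of_nonneg hft₀ (Real.exp_pos _).le
  linarith
end

section
/- Let H be a real Hilbert space and let V : [0,∞) → L(H) be a differentiable operator-valued function satisfying V'(t) + A(t)V(t) = G(t), where A(t), G(t) ∈ L(H) are continuous in t. Suppose there is a continuous function γ(t) > 0 with (A(t)h, h) ≥ γ(t)‖h‖² for all h ∈ H and t ≥ 0. Then for all t ≥ 0: ‖V(t)‖ ≤ exp(−∫₀ᵗ γ(p) dp) [∫₀ᵗ ‖G(s)‖ exp(∫₀ˢ γ(p) dp) ds + ‖V(0)‖]. -/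
open Set Real intervalIntegral

theorem operator_gronwall_key
    {H : Type*} [NormedAddCommGroup H] [InnerProductSpace ℝ H] [CompleteSpace H]
    (V V' A G : ℝ → H →L[ℝ] H) (γ : ℝ → ℝ)
    (hG : ContinuousOn G (Ici 0))
    (hγcont : ContinuousOn γ (Ici 0)) (hγpos : ∀ t ∈ Ici (0:ℝ), 0 < γ t)
    (hVderiv : ∀ t ∈ Ici (0:ℝ), HasDerivAt V (V' t) t)
    (hODE : ∀ t ∈ Ici (0:ℝ), V' t + A t ∘L V t = G t)
    (hcoercive : ∀ t ∈ Ici (0:ℝ), ∀ h : H, γ t * ‖h‖ ^ 2 ≤ inner ℝ (A t h) h)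
    (h : H) (t : ℝ) (ht : 0 ≤ t) (ε : ℝ) (hε : 0 < ε) :
    ‖V t h‖ ≤ Real.exp (-∫ p in (0:ℝ)..t, γ p) *
        ((∫ s in (0:ℝ)..t, ‖G s‖ * Real.exp (∫ p in (0:ℝ)..s, γ p)) + ‖V 0‖) * ‖h‖
      + ε * (Real.exp (-∫ p in (0:ℝ)..t, γ p) *
        ((∫ s in (0:ℝ)..t, Real.exp (∫ p in (0:ℝ)..s, γ p)) + 1)) := by
  have hmax : ∀ s : ℝ, max s 0 ∈ Ici (0:ℝ) := fun s => le_max_right s 0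
  set g1 : ℝ → ℝ := fun s => γ (max s 0) with hg1def
  set g2 : ℝ → ℝ := fun s => ‖G (max s 0)‖ with hg2def
  have hg1c : Continuous g1 :=
    hγcont.comp_continuous (continuous_id.max continuous_const) hmax
  have hg2c : Continuous g2 :=
    hG.norm.comp_continuous (continuous_id.max continuous_const) hmax
  have hg1pos : ∀ s, 0 < g1 s := fun s => hγpos _ (hmax s)
  have hg2nonneg : ∀ s, 0 ≤ g2 s := fun s => norm_nonneg _
  set Φ : ℝ → ℝ := fun s => ∫ p in (0:ℝ)..s, g1 p with hΦdef
  have hΦd : ∀ s, HasDerivAt Φ (g1 s) s := fun s =>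
    intervalIntegral.integral_hasDerivAt_right (hg1c.intervalIntegrable _ _)
      hg1c.stronglyMeasurable.stronglyMeasurableAtFilter hg1c.continuousAt
  have hΦc : Continuous Φ := continuous_iff_continuousAt.2 fun s => (hΦd s).continuousAt
  -- the integrand for the bound
  set w : ℝ → ℝ := fun p => (g2 p * ‖h‖ + ε) * Real.exp (Φ p) with hwdef
  have hwc : Continuous w := by fun_prop
  have hwpos : ∀ p, 0 < w p := fun p => by
    have := hg2nonneg p
    positivity
  set I : ℝ → ℝ := fun s => ∫ p in (0:ℝ)..s, w p with hIdef
  have hId : ∀ s, HasDerivAt I (w s) s := fun s =>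
    intervalIntegral.integral_hasDerivAt_right (hwc.intervalIntegrable _ _)
      hwc.stronglyMeasurable.stronglyMeasurableAtFilter hwc.continuousAt
  set B : ℝ → ℝ := fun s => Real.exp (-Φ s) * (I s + (‖V 0‖ * ‖h‖ + ε)) with hBdef
  have hexp1 : ∀ s, Real.exp (-Φ s) * Real.exp (Φ s) = 1 := fun s => by
    rw [← Real.exp_add]; simp
  have hBd : ∀ s, HasDerivAt B (-g1 s * B s + (g2 s * ‖h‖ + ε)) s := by
    intro s
    have h1 : HasDerivAt (fun u => Real.exp (-Φ u)) (Real.exp (-Φ s) * (-g1 s)) s := by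
      have := ((hΦd s).neg).exp
      simpa [mul_comm] using this
    have h2 : HasDerivAt (fun u => I u + (‖V 0‖ * ‖h‖ + ε)) (w s) s := (hId s).add_const _
    have : HasDerivAt (fun u => Real.exp (-Φ u) * (I u + (‖V 0‖ * ‖h‖ + ε))) _ s := h1.mul h2
    convert this using 1
    have e1 := hexp1 s
    simp only [hBdef, hwdef]
    linear_combination (-(g2 s * ‖h‖ + ε)) * e1
  have hBpos : ∀ s, 0 ≤ s → 0 < B s := by
    intro s hs
    have hI : 0 ≤ I s :=
      intervalIntegral.integral_nonneg hs fun p _ => (hwpos p).le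
    have : 0 < I s + (‖V 0‖ * ‖h‖ + ε) := by
      have := mul_nonneg (norm_nonneg (V 0)) (norm_nonneg h); linarith
    positivity
  -- the vector trajectory
  set v : ℝ → H := fun s => V s h with hvdef
  have hvd : ∀ x ∈ Ici (0:ℝ), HasDerivAt v (V' x h) x := by
    intro x hx
    have := (hVderiv x hx).clm_apply (hasDerivAt_const x h)
    simpa using this
  set f : ℝ → ℝ := fun s => inner ℝ (v s) (v s) with hfdef
  set f' : ℝ → ℝ := fun x => 2 * inner ℝ (V' x h) (v x) with hf'def
  have hfd : ∀ x ∈ Ici (0:ℝ), HasDerivAt f (f' x) x := by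
    intro x hx
    have : HasDerivAt f _ x := HasDerivAt.inner ℝ (hvd x hx) (hvd x hx)
    convert this using 1
    simp only [hf'def]
    rw [real_inner_comm (v x) (V' x h)]
    ring
  have hfnorm : ∀ s, f s = ‖v s‖ ^ 2 := fun s => real_inner_self_eq_norm_sq (v s)
  -- apply the fencing theorem to f vs B^2
  have main : f t ≤ (B t) ^ 2 := by
    have hfc : ContinuousOn f (Icc 0 t) := fun x hx =>
      ((hfd x hx.1).continuousAt).continuousWithinAt
    have hfd' : ∀ x ∈ Ico 0 t, HasDerivWithinAt f (f' x) (Ici x) x := fun x hx =>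
      (hfd x hx.1).hasDerivWithinAt
    have hB2d : ∀ x, HasDerivAt (fun s => (B s) ^ 2)
        (2 * B x * (-g1 x * B x + (g2 x * ‖h‖ + ε))) x := by
      intro x
      have : HasDerivAt (fun s => (B s) ^ 2) _ x := (hBd x).pow 2
      convert this using 1
      push_cast
      ring
    have ha : f 0 ≤ (B 0) ^ 2 := by
      have hB0 : B 0 = ‖V 0‖ * ‖h‖ + ε := by
        simp [hBdef, hIdef, hΦdef]
      rw [hfnorm, hB0]
      have h1 : ‖v 0‖ ≤ ‖V 0‖ * ‖h‖ := (V 0).le_opNorm h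
      nlinarith [norm_nonneg (v 0), mul_nonneg (norm_nonneg (V 0)) (norm_nonneg h)]
    have bound : ∀ x ∈ Ico 0 t, f x = (B x) ^ 2 →
        f' x < 2 * B x * (-g1 x * B x + (g2 x * ‖h‖ + ε)) := by
      intro x hx hfx
      have hx0 : x ∈ Ici (0:ℝ) := hx.1
      have hBx : 0 < B x := hBpos x hx.1
      have hvx : ‖v x‖ = B x := by
        have h1 : ‖v x‖ ^ 2 = (B x) ^ 2 := by rw [← hfnorm]; exact hfx
        nlinarith [norm_nonneg (v x)]
      have hVx : V' x h = G x h - A x (v x) := by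
        have h1 := hODE x hx0
        have h2 := DFunLike.congr_fun h1 h
        simp only [ContinuousLinearMap.add_apply, ContinuousLinearMap.coe_comp',
          Function.comp_apply] at h2
        exact eq_sub_of_add_eq h2
      have hinner : inner ℝ (V' x h) (v x) ≤ g2 x * ‖h‖ * B x - g1 x * (B x) ^ 2 := by
        rw [hVx, inner_sub_left]
        have hcoer := hcoercive x hx0 (v x)
        have hG1 : (inner ℝ (G x h) (v x) : ℝ) ≤ ‖G x‖ * ‖h‖ * ‖v x‖ := by
          calc (inner ℝ (G x h) (v x) : ℝ) ≤ ‖G x h‖ * ‖v x‖ := real_inner_le_norm _ _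
            _ ≤ ‖G x‖ * ‖h‖ * ‖v x‖ :=
              mul_le_mul_of_nonneg_right ((G x).le_opNorm h) (norm_nonneg _)
        have hgx : g1 x = γ x := by simp [hg1def, max_eq_left hx.1]
        have hGx : g2 x = ‖G x‖ := by simp [hg2def, max_eq_left hx.1]
        rw [hgx, hGx, ← hvx]
        nlinarith [hcoer, hG1]
      have : f' x ≤ 2 * (g2 x * ‖h‖ * B x - g1 x * (B x) ^ 2) := by
        simp only [hf'def]; linarith
      nlinarith [mul_pos hε hBx]
    have := image_le_of_deriv_right_lt_deriv_boundary hfc hfd' ha hB2d bound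
      (right_mem_Icc.2 ht)
    exact this
  have hvt : ‖v t‖ ≤ B t := by
    have h1 : ‖v t‖ ^ 2 ≤ (B t) ^ 2 := by rw [← hfnorm]; exact main
    nlinarith [norm_nonneg (v t), hBpos t ht]
  -- rewrite B t into the target form
  have hΦeq : ∀ s, 0 ≤ s → Φ s = ∫ p in (0:ℝ)..s, γ p := by
    intro s hs
    apply intervalIntegral.integral_congr
    intro p hp
    rw [uIcc_of_le hs] at hp
    simp [hg1def, max_eq_left hp.1]
  have hIeq : I t = ‖h‖ * (∫ s in (0:ℝ)..t, ‖G s‖ * Real.exp (∫ p in (0:ℝ)..s, γ p))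
      + ε * ∫ s in (0:ℝ)..t, Real.exp (∫ p in (0:ℝ)..s, γ p) := by
    have h1 : I t = ∫ p in (0:ℝ)..t,
        (‖h‖ * (g2 p * Real.exp (Φ p)) + ε * Real.exp (Φ p)) := by
      apply intervalIntegral.integral_congr
      intro p _
      simp only [hwdef]; ring
    rw [h1, intervalIntegral.integral_add, intervalIntegral.integral_const_mul,
      intervalIntegral.integral_const_mul]
    · congr 1
      · congr 1
        apply intervalIntegral.integral_congr
        intro p hp
        rw [uIcc_of_le ht] at hp
        show g2 p * Real.exp (Φ p) = ‖G p‖ * Real.exp (∫ q in (0:ℝ)..p, γ q)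
        rw [hΦeq p hp.1]
        simp [hg2def, max_eq_left hp.1]
      · congr 1
        apply intervalIntegral.integral_congr
        intro p hp
        rw [uIcc_of_le ht] at hp
        show Real.exp (Φ p) = Real.exp (∫ q in (0:ℝ)..p, γ q)
        rw [hΦeq p hp.1]
    · exact (Continuous.intervalIntegrable (by fun_prop) _ _)
    · exact (Continuous.intervalIntegrable (by fun_prop) _ _)
  calc ‖V t h‖ = ‖v t‖ := rfl
    _ ≤ B t := hvt
    _ = _ := by
      simp only [hBdef]
      rw [hΦeq t ht, hIeq]
      ring

theorem operator_gronwall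
    {H : Type*} [NormedAddCommGroup H] [InnerProductSpace ℝ H] [CompleteSpace H]
    (V V' A G : ℝ → H →L[ℝ] H) (γ : ℝ → ℝ)
    (hA : ContinuousOn A (Ici 0)) (hG : ContinuousOn G (Ici 0))
    (hγcont : ContinuousOn γ (Ici 0)) (hγpos : ∀ t ∈ Ici (0:ℝ), 0 < γ t)
    (hVderiv : ∀ t ∈ Ici (0:ℝ), HasDerivAt V (V' t) t)
    (hODE : ∀ t ∈ Ici (0:ℝ), V' t + A t ∘L V t = G t)
    (hcoercive : ∀ t ∈ Ici (0:ℝ), ∀ h : H, γ t * ‖h‖ ^ 2 ≤ inner ℝ (A t h) h) :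
    ∀ t ∈ Ici (0:ℝ),
      ‖V t‖ ≤ Real.exp (-∫ p in (0:ℝ)..t, γ p) *
        ((∫ s in (0:ℝ)..t, ‖G s‖ * Real.exp (∫ p in (0:ℝ)..s, γ p)) + ‖V 0‖) := by
  intro t ht
  set M : ℝ := Real.exp (-∫ p in (0:ℝ)..t, γ p) *
    ((∫ s in (0:ℝ)..t, ‖G s‖ * Real.exp (∫ p in (0:ℝ)..s, γ p)) + ‖V 0‖) with hMdef
  set K : ℝ := Real.exp (-∫ p in (0:ℝ)..t, γ p) *
    ((∫ s in (0:ℝ)..t, Real.exp (∫ p in (0:ℝ)..s, γ p)) + 1) with hKdef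
  have hJ : 0 ≤ ∫ s in (0:ℝ)..t, ‖G s‖ * Real.exp (∫ p in (0:ℝ)..s, γ p) :=
    intervalIntegral.integral_nonneg ht fun s _ => by positivity
  have hJ2 : 0 ≤ ∫ s in (0:ℝ)..t, Real.exp (∫ p in (0:ℝ)..s, γ p) :=
    intervalIntegral.integral_nonneg ht fun s _ => (Real.exp_pos _).le
  have hM : 0 ≤ M := by
    have := norm_nonneg (V 0)
    have := Real.exp_pos (-∫ p in (0:ℝ)..t, γ p)
    nlinarith
  have hK : 0 < K := by
    have := Real.exp_pos (-∫ p in (0:ℝ)..t, γ p)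
    nlinarith
  refine ContinuousLinearMap.opNorm_le_bound _ hM fun h => ?_
  refine le_of_forall_pos_le_add fun δ hδ => ?_
  have key := operator_gronwall_key V V' A G γ hG hγcont hγpos hVderiv hODE hcoercive
    h t ht (δ / K) (div_pos hδ hK)
  calc ‖V t h‖ ≤ M * ‖h‖ + (δ / K) * K := key
    _ = M * ‖h‖ + δ := by field_simp
end

section
/- Let ε : [0,∞) → (0,∞) be C¹, monotonically decreasing to 0, satisfying |ε'(t)| ≤ b ε(t)² for all t ≥ 0 with constant b > 0. Let B : [0,∞) → L(H) be differentiable and satisfy the linear operator ODE B'(t) = −[A(t) + ε(t)I]B(t) + I, where A(t) ∈ L(H) is continuous in t and satisfies (A(t)h,h) ≥ 0 for all h ∈ H. Then for all t ≥ 0: ‖B(t)‖ ≤ 1/ε(t) + ‖B(0)‖. -/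
open Set Real

theorem inverse_update_norm_bound
    {H : Type*} [NormedAddCommGroup H] [InnerProductSpace ℝ H] [CompleteSpace H]
    (ε ε' : ℝ → ℝ) (b : ℝ) (hb : 0 < b)
    (hεpos : ∀ t ∈ Ici (0:ℝ), 0 < ε t)
    (hεderiv : ∀ t ∈ Ici (0:ℝ), HasDerivAt ε (ε' t) t)
    (hε'cont : ContinuousOn ε' (Ici 0))
    (hεanti : AntitoneOn ε (Ici 0))
    (hεlim : Filter.Tendsto ε Filter.atTop (nhds 0))
    (hεb : ∀ t ∈ Ici (0:ℝ), |ε' t| ≤ b * (ε t) ^ 2)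
    (A B B' : ℝ → H →L[ℝ] H)
    (hAcont : ContinuousOn A (Ici 0))
    (hAnonneg : ∀ t ∈ Ici (0:ℝ), ∀ h : H, (0:ℝ) ≤ inner ℝ (A t h) h)
    (hBderiv : ∀ t ∈ Ici (0:ℝ), HasDerivAt B (B' t) t)
    (hODE : ∀ t ∈ Ici (0:ℝ), B' t = -((A t + ε t • (1 : H →L[ℝ] H)) ∘L B t) + 1) :
    ∀ t ∈ Ici (0:ℝ), ‖B t‖ ≤ 1 / ε t + ‖B 0‖ := by
  intro t ht
  have ht0 : (0:ℝ) ≤ t := ht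
  have hεt : 0 < ε t := hεpos t ht
  have hbound : (0:ℝ) ≤ 1 / ε t + ‖B 0‖ := by positivity
  -- continuity of s ↦ B s h on Ici 0
  have hBcont : ∀ s ∈ Ici (0:ℝ), ∀ h : H, ContinuousAt (fun r => B r h) s := by
    intro s hs h
    exact ((hBderiv s hs).clm_apply (hasDerivAt_const s h)).continuousAt
  -- pointwise key bound
  have key : ∀ h : H, ‖B t h‖ ≤ (1 / ε t + ‖B 0‖) * ‖h‖ := by
    intro h
    by_contra hcon
    push_neg at hcon
    have hh : 0 < ‖h‖ := by
      rcases eq_or_ne h 0 with rfl | hne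
      · simp at hcon
      · exact norm_pos_iff.mpr hne
    set m : ℝ → ℝ := fun s => (1 / ε s + ‖B 0‖) * ‖h‖ with hm
    set S : Set ℝ := {s ∈ Icc (0:ℝ) t | ‖B s h‖ ≤ m s} with hS
    have hmem0 : (0:ℝ) ∈ S := by
      refine ⟨⟨le_refl 0, ht0⟩, ?_⟩
      have h1 : ‖B 0 h‖ ≤ ‖B 0‖ * ‖h‖ := (B 0).le_opNorm h
      have h2 : ‖B 0‖ * ‖h‖ ≤ m 0 := by
        have hε0 : 0 < ε 0 := hεpos 0 (mem_Ici.mpr le_rfl)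
        have hp : (0:ℝ) ≤ 1 / ε 0 * ‖h‖ := by positivity
        simp only [hm]
        nlinarith
      linarith
    have hSsub : S ⊆ Icc 0 t := fun s hs => hs.1
    have hSbdd : BddAbove S := (isCompact_Icc.bddAbove).mono hSsub
    have hSclosed : IsClosed S := by
      have hg : ContinuousOn (fun s => ‖B s h‖ - m s) (Icc 0 t) := by
        apply ContinuousOn.sub
        · exact fun s hs => ((hBcont s (Icc_subset_Ici_self hs) h).continuousWithinAt).norm
        · apply ContinuousOn.mul _ continuousOn_const
          apply ContinuousOn.add _ continuousOn_const
          apply ContinuousOn.div continuousOn_const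
          · exact fun s hs => ((hεderiv s (Icc_subset_Ici_self hs)).continuousAt).continuousWithinAt
          · exact fun s hs => (hεpos s (Icc_subset_Ici_self hs)).ne'
      have : S = Icc 0 t ∩ (fun s => ‖B s h‖ - m s) ⁻¹' Iic 0 := by
        ext s; simp [hS, and_assoc, sub_nonpos]
      rw [this]
      exact hg.preimage_isClosed_of_isClosed isClosed_Icc isClosed_Iic
    set t0 := sSup S with ht0def
    have ht0S : t0 ∈ S := hSclosed.csSup_mem ⟨0, hmem0⟩ hSbdd
    have ht0nonneg : (0:ℝ) ≤ t0 := ht0S.1.1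
    have ht0le : t0 ≤ t := ht0S.1.2
    have ht0lt : t0 < t := by
      rcases lt_or_eq_of_le ht0le with h' | h'
      · exact h'
      · exfalso; rw [h'] at ht0S; exact absurd ht0S.2 (not_le.mpr hcon)
    -- on (t0, t], ‖B s h‖ > m s
    have habove : ∀ s ∈ Ioc t0 t, m s < ‖B s h‖ := by
      intro s hs
      by_contra hle
      push_neg at hle
      have : s ∈ S := ⟨⟨le_trans ht0nonneg hs.1.le, hs.2⟩, hle⟩
      exact absurd (le_csSup hSbdd this) (not_le.mpr hs.1)
    -- f s = ⟪B s h, B s h⟫ is strictly decreasing on [t0, t]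
    set f : ℝ → ℝ := fun s => (inner ℝ (B s h) (B s h) : ℝ) with hf
    have hfderiv : ∀ s ∈ Ici (0:ℝ),
        HasDerivAt f ((inner ℝ (B s h) (B' s h) : ℝ) + inner ℝ (B' s h) (B s h)) s := by
      intro s hs
      have hd : HasDerivAt (fun r => B r h) (B' s h) s := by
        have := (hBderiv s hs).clm_apply (hasDerivAt_const s h)
        simpa using this
      exact hd.inner ℝ hd
    have hfanti : StrictAntiOn f (Icc t0 t) := by
      apply strictAntiOn_of_deriv_neg (convex_Icc t0 t)
      · intro s hs
        exact ((hfderiv s (le_trans ht0nonneg hs.1)).continuousAt).continuousWithinAt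
      · intro s hs
        rw [interior_Icc] at hs
        have hs0 : s ∈ Ici (0:ℝ) := le_trans ht0nonneg hs.1.le
        have hderiv := hfderiv s hs0
        rw [hderiv.deriv]
        have hεs : 0 < ε s := hεpos s hs0
        set u := ‖B s h‖ with hu
        have hmu : m s < u := habove s ⟨hs.1, hs.2.le⟩
        have hupos : 0 < u := lt_of_le_of_lt (by positivity) hmu
        -- compute inner ℝ (B' s h) (B s h)
        have hBs : B' s h = -(A s (B s h)) - ε s • B s h + h := by
          rw [hODE s hs0]
          simp [ContinuousLinearMap.comp_apply, sub_eq_add_neg]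
          abel
        have hinner : (inner ℝ (B' s h) (B s h) : ℝ)
            = -(inner ℝ (A s (B s h)) (B s h) : ℝ) - ε s * u ^ 2 + inner ℝ h (B s h) := by
          rw [hBs]
          rw [inner_add_left, inner_sub_left, inner_neg_left, inner_smul_left]
          rw [real_inner_self_eq_norm_sq]
          simp only [starRingEnd_apply, star_trivial]
          rfl
        have hAn : (0:ℝ) ≤ inner ℝ (A s (B s h)) (B s h) := hAnonneg s hs0 (B s h)
        have hhb : (inner ℝ h (B s h) : ℝ) ≤ ‖h‖ * u := by
          calc (inner ℝ h (B s h) : ℝ) ≤ ‖h‖ * ‖B s h‖ := real_inner_le_norm h (B s h)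
            _ = ‖h‖ * u := rfl
        have hεu : ‖h‖ < ε s * u := by
          have h1 : ‖h‖ / ε s ≤ m s := by
            rw [hm]
            have : (0:ℝ) ≤ ‖B 0‖ * ‖h‖ := by positivity
            have hdiv : ‖h‖ / ε s = 1 / ε s * ‖h‖ := by ring
            linarith [hdiv.le, hdiv.ge]
          have h2 : ‖h‖ / ε s < u := lt_of_le_of_lt h1 hmu
          calc ‖h‖ = ε s * (‖h‖ / ε s) := by field_simp
            _ < ε s * u := by exact mul_lt_mul_of_pos_left h2 hεs
        have hle : (inner ℝ (B' s h) (B s h) : ℝ) < 0 := by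
          rw [hinner]
          have : ε s * u ^ 2 = (ε s * u) * u := by ring
          nlinarith
        have hsymm : (inner ℝ (B s h) (B' s h) : ℝ) = inner ℝ (B' s h) (B s h) :=
          real_inner_comm _ _
        rw [hsymm]
        linarith
    have hft : f t < f t0 :=
      hfanti ⟨le_refl t0, ht0le⟩ ⟨ht0le, le_refl t⟩ ht0lt
    have hfval : ∀ s, f s = ‖B s h‖ ^ 2 := by
      intro s; rw [hf]; exact real_inner_self_eq_norm_sq _
    rw [hfval, hfval] at hft
    have hut : ‖B t h‖ < ‖B t0 h‖ := by
      nlinarith [norm_nonneg (B t h), norm_nonneg (B t0 h)]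
    -- but ‖B t0 h‖ ≤ m t0 ≤ m t < ‖B t h‖
    have hmono : m t0 ≤ m t := by
      rw [hm]
      have hε : ε t ≤ ε t0 := hεanti (le_refl 0 |>.trans ht0nonneg) ht ht0le
      have h1 : 1 / ε t0 ≤ 1 / ε t := by
        apply one_div_le_one_div_of_le hεt hε
      nlinarith
    have : ‖B t h‖ < ‖B t h‖ := lt_of_lt_of_le hut (le_trans ht0S.2 (le_trans hmono hcon.le))
    exact lt_irrefl _ this
  exact (B t).opNorm_le_bound hbound key
end

section
/- Let v : [0,∞) → [0,∞) be differentiable and satisfy v'(t) ≤ −(1−k) v(t) + (S/(2ε(t))) v(t)² + ε(t) C for all t ≥ 0, where k ∈ [0,1), S, C ≥ 0, and ε : [0,∞) → (0,∞) is C¹ decreasing with |ε'(t)| ≤ b ε(t)², k + bε(0) < 1. If there exists λ satisfying λ ≥ S/(1 − k − bε(0)), λ < (1 − k − bε(0))/(2C) (when C > 0), and λ v(0) < ε(0), then v(t) < ε(t)/λ for all t ≥ 0. -/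
open Set Filter Topology

theorem riccati_with_mu_choice
    (v v' ε ε' : ℝ → ℝ) (k S C b lam : ℝ)
    (hk : k ∈ Ico (0:ℝ) 1) (hS : 0 ≤ S) (hC : 0 ≤ C) (hb : 0 < b)
    (hεpos : ∀ t ∈ Ici (0:ℝ), 0 < ε t)
    (hεderiv : ∀ t ∈ Ici (0:ℝ), HasDerivAt ε (ε' t) t)
    (hε'cont : ContinuousOn ε' (Ici 0))
    (hεanti : AntitoneOn ε (Ici 0))
    (hεb : ∀ t ∈ Ici (0:ℝ), |ε' t| ≤ b * (ε t) ^ 2)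
    (hsmall : k + b * ε 0 < 1)
    (hvnonneg : ∀ t ∈ Ici (0:ℝ), 0 ≤ v t)
    (hvderiv : ∀ t ∈ Ici (0:ℝ), HasDerivAt v (v' t) t)
    (hvineq : ∀ t ∈ Ici (0:ℝ),
      v' t ≤ -(1 - k) * v t + S / (2 * ε t) * (v t) ^ 2 + ε t * C)
    (hlam1 : lam ≥ S / (1 - k - b * ε 0))
    (hlam2 : 0 < C → lam < (1 - k - b * ε 0) / (2 * C))
    (hlampos : 0 < lam)
    (hinit : lam * v 0 < ε 0) :
    ∀ t ∈ Ici (0:ℝ), v t < ε t / lam := by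
  set δ : ℝ := 1 - k - b * ε 0 with hδdef
  have hδpos : 0 < δ := by
    have := hsmall; simp only [hδdef]; linarith
  set g : ℝ → ℝ := fun t => v t - ε t / lam with hgdef
  have hg0 : g 0 < 0 := by
    have : v 0 < ε 0 / lam := by
      rw [lt_div_iff₀ hlampos]; linarith [hinit]
    simp [hgdef]; linarith
  by_contra hcon
  push_neg at hcon
  obtain ⟨t₁, ht₁0, ht₁⟩ := hcon
  set A : Set ℝ := {t | 0 ≤ t ∧ 0 ≤ g t} with hAdef
  have hAne : A.Nonempty := ⟨t₁, ht₁0, by simp only [hgdef]; linarith [ht₁]⟩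
  have hAbdd : BddBelow A := ⟨0, fun x hx => hx.1⟩
  set t₀ : ℝ := sInf A with ht₀def
  have ht₀0 : 0 ≤ t₀ := le_csInf hAne fun x hx => hx.1
  have hgcont : ∀ t ∈ Ici (0:ℝ), ContinuousAt g t := fun t ht =>
    ((hvderiv t ht).continuousAt).sub (((hεderiv t ht).continuousAt).div_const lam)
  -- g t₀ ≥ 0
  have ht₀cl : t₀ ∈ closure A := csInf_mem_closure hAne hAbdd
  have hne : (𝓝[A] t₀).NeBot := mem_closure_iff_nhdsWithin_neBot.1 ht₀cl
  have hg₀ : 0 ≤ g t₀ := by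
    refine ge_of_tendsto (((hgcont t₀ ht₀0).continuousWithinAt) : Tendsto g (𝓝[A] t₀) (𝓝 (g t₀))) ?_
    filter_upwards [self_mem_nhdsWithin] with x hx using hx.2
  have ht₀pos : 0 < t₀ := by
    rcases lt_or_eq_of_le ht₀0 with h | h
    · exact h
    · exfalso; rw [← h] at hg₀; linarith
  -- g < 0 on [0, t₀)
  have hgneg : ∀ s, 0 ≤ s → s < t₀ → g s < 0 := by
    intro s hs0 hst
    by_contra h
    push_neg at h
    have : t₀ ≤ s := csInf_le hAbdd ⟨hs0, h⟩
    linarith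
  -- g t₀ ≤ 0
  have hIoo_cl : t₀ ∈ closure (Ioo 0 t₀) := by
    rw [closure_Ioo (ne_of_lt ht₀pos)]; exact ⟨le_of_lt ht₀pos, le_refl _⟩
  have hneI : (𝓝[Ioo 0 t₀] t₀).NeBot := mem_closure_iff_nhdsWithin_neBot.1 hIoo_cl
  have hg₀' : g t₀ ≤ 0 := by
    refine le_of_tendsto (((hgcont t₀ ht₀0).continuousWithinAt) : Tendsto g (𝓝[Ioo 0 t₀] t₀) (𝓝 (g t₀))) ?_
    filter_upwards [self_mem_nhdsWithin] with x hx using le_of_lt (hgneg x (le_of_lt hx.1) hx.2)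
  have hgeq : g t₀ = 0 := le_antisymm hg₀' hg₀
  -- derivative of g at t₀
  have hgderiv : HasDerivAt g (v' t₀ - ε' t₀ / lam) t₀ :=
    (hvderiv t₀ ht₀0).sub ((hεderiv t₀ ht₀0).div_const lam)
  -- slope nonneg from the left
  have hslope : 0 ≤ v' t₀ - ε' t₀ / lam := by
    have hW : HasDerivWithinAt g (v' t₀ - ε' t₀ / lam) (Ioo 0 t₀) t₀ :=
      hgderiv.hasDerivWithinAt
    have htend := hasDerivWithinAt_iff_tendsto_slope.1 hW
    have hsd : Ioo 0 t₀ \ {t₀} = Ioo 0 t₀ := by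
      apply diff_singleton_eq_self; simp
    rw [hsd] at htend
    refine ge_of_tendsto htend ?_
    filter_upwards [self_mem_nhdsWithin] with s hs
    have hgs : g s < 0 := hgneg s (le_of_lt hs.1) hs.2
    have : slope g t₀ s = (g s - g t₀) / (s - t₀) := slope_def_field g t₀ s
    rw [this, hgeq, sub_zero]
    exact le_of_lt (div_pos_of_neg_of_neg hgs (by linarith [hs.2]))
  -- now derive contradiction
  have hεt₀ : 0 < ε t₀ := hεpos t₀ ht₀0
  have hveq : v t₀ = ε t₀ / lam := by
    have : g t₀ = v t₀ - ε t₀ / lam := rfl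
    linarith [hgeq, this.symm.trans hgeq]
  have hεle : ε t₀ ≤ ε 0 := hεanti (mem_Ici.2 (le_refl (0:ℝ))) ht₀0 ht₀0
  have hε'lb : -(b * (ε t₀)^2) ≤ ε' t₀ := neg_le_of_abs_le (hεb t₀ ht₀0)
  have hvi := hvineq t₀ ht₀0
  rw [hveq] at hvi
  -- bound: v' t₀ ≤ (ε t₀/lam) * (-(1-k) + S/(2 lam) + lam * C)
  have hkey : v' t₀ - ε' t₀ / lam ≤ (ε t₀ / lam) * (-(1-k) + S/(2*lam) + lam * C + b * ε t₀) := by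
    have h1 : S / (2 * ε t₀) * (ε t₀ / lam)^2 = (ε t₀ / lam) * (S / (2 * lam)) := by
      field_simp
    have h2 : ε t₀ * C = (ε t₀ / lam) * (lam * C) := by field_simp
    have h3 : -(ε' t₀ / lam) ≤ (ε t₀ / lam) * (b * ε t₀) := by
      have hεq : (ε t₀ / lam) * (b * ε t₀) = b * (ε t₀)^2 / lam := by field_simp
      rw [hεq, ← neg_div]
      exact (div_le_div_iff_of_pos_right hlampos).2 (by linarith [hε'lb])
    nlinarith [hvi, h3, hεt₀, hlampos]
  -- the bracket is negative
  have hbr : -(1-k) + S/(2*lam) + lam * C + b * ε t₀ < 0 := by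
    have hS2 : S / (2 * lam) ≤ δ / 2 := by
      have hSle : S ≤ lam * δ := by
        have := hlam1
        rw [ge_iff_le, div_le_iff₀ hδpos] at this
        linarith
      rw [div_le_div_iff₀ (by linarith) (by norm_num)]
      linarith
    have hlC : lam * C < δ / 2 := by
      rcases eq_or_lt_of_le hC with h | h
      · rw [← h]; simp; linarith
      · have := hlam2 h
        rw [lt_div_iff₀ (by linarith)] at this
        linarith
    have hbε : b * ε t₀ ≤ b * ε 0 := by
      apply mul_le_mul_of_nonneg_left hεle (le_of_lt hb)
    simp only [hδdef] at hS2 hlC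
    linarith
  have : (ε t₀ / lam) * (-(1-k) + S/(2*lam) + lam * C + b * ε t₀) < 0 :=
    mul_neg_of_pos_of_neg (div_pos hεt₀ hlampos) hbr
  linarith
end
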